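/- For two unit contact normals u ≠ ±v, set γ as in the angular feasibility condition, r₀ = (u+v)/‖u+v‖, and let (w_i) be any minimal alternating sequence from {u,v}. Define r_i = r₀ Γ(w_1)⋯Γ(w_i). Then ⟨r_i, r₀⟩ = cos(2iγ) for all i. -/

import Mathlib

open Matrix

noncomputable def kin {n : ℕ} (M : Matrix (Fin n) (Fin n) ℝ)
    (x y : Matrix (Fin 1) (Fin n) ℝ) : ℝ :=
  (x * M⁻¹ * yᵀ) 0 0

noncomputable def Gam {n : ℕ} (M : Matrix (Fin n) (Fin n) ℝ)
    (u : Matrix (Fin 1) (Fin n) ℝ) : Matrix (Fin n) (Fin n) ℝ :=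
  1 - (2 / kin M u u) • (M⁻¹ * uᵀ * u)

/-!
Write `c = ⟨u, v⟩` and `N = ‖u + v‖`, so `N² = 2 + 2c`. Then `⟨r₀, u⟩ = ⟨r₀, v⟩ = N / 2 = sin γ`
and `cos 2γ = 1 - N² / 2 = -c`. Since `⟨x Γ(w), y⟩ = ⟨x, y⟩ - 2 ⟨x, w⟩ ⟨w, y⟩`, the pairings of
`r_i` with the two mirrors obey the recurrence `s_{k+1} = 2 cos(2γ) s_k - s_{k-1}`, whence
`⟨r_i, w_{i+1}⟩ = sin((2i+1)γ)` and `⟨r_i, w_{i+2}⟩ = -sin((2i-1)γ)`. Summing the two,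
`N ⟨r_i, r₀⟩ = sin((2i+1)γ) - sin((2i-1)γ) = 2 sin γ cos(2iγ) = N cos(2iγ)`.
-/

open Real

section Kin

variable {n : ℕ} {M : Matrix (Fin n) (Fin n) ℝ}

lemma kin_eq_dotProduct (x y : Matrix (Fin 1) (Fin n) ℝ) :
    kin M x y = x 0 ⬝ᵥ M⁻¹ *ᵥ y 0 := by
  simp only [kin, mul_apply, transpose_apply, dotProduct, mulVec, Finset.sum_mul,
    Finset.mul_sum]
  rw [Finset.sum_comm]
  exact Finset.sum_congr rfl fun _ _ => Finset.sum_congr rfl fun _ _ => by ring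

lemma kin_add_left (x y z : Matrix (Fin 1) (Fin n) ℝ) :
    kin M (x + y) z = kin M x z + kin M y z := by
  simp [kin, Matrix.add_mul]

lemma kin_add_right (x y z : Matrix (Fin 1) (Fin n) ℝ) :
    kin M x (y + z) = kin M x y + kin M x z := by
  simp [kin, Matrix.mul_add]

lemma kin_sub_left (x y z : Matrix (Fin 1) (Fin n) ℝ) :
    kin M (x - y) z = kin M x z - kin M y z := by
  simp [kin, Matrix.sub_mul]

lemma kin_sub_right (x y z : Matrix (Fin 1) (Fin n) ℝ) :
    kin M x (y - z) = kin M x y - kin M x z := by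
  simp [kin, Matrix.mul_sub]

lemma kin_smul_left (c : ℝ) (x y : Matrix (Fin 1) (Fin n) ℝ) :
    kin M (c • x) y = c * kin M x y := by
  simp [kin]

lemma kin_smul_right (c : ℝ) (x y : Matrix (Fin 1) (Fin n) ℝ) :
    kin M x (c • y) = c * kin M x y := by
  simp [kin]

lemma kin_comm (hM : M.IsSymm) (x y : Matrix (Fin 1) (Fin n) ℝ) :
    kin M x y = kin M y x := by
  have hinv : (M⁻¹)ᵀ = M⁻¹ := by rw [transpose_nonsing_inv, hM.eq]
  calc kin M x y = (x * M⁻¹ * yᵀ)ᵀ 0 0 := rfl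
    _ = kin M y x := by rw [transpose_mul, transpose_mul, transpose_transpose, hinv, ← Matrix.mul_assoc]; rfl

lemma kin_self_nonneg (hM : M.PosSemidef) (x : Matrix (Fin 1) (Fin n) ℝ) : 0 ≤ kin M x x := by
  simpa [kin_eq_dotProduct] using hM.inv.dotProduct_mulVec_nonneg (x 0)

lemma kin_self_pos (hM : M.PosDef) {x : Matrix (Fin 1) (Fin n) ℝ} (hx : x ≠ 0) :
    0 < kin M x x := by
  have hx0 : x 0 ≠ 0 := fun h => hx (funext fun i => Fin.fin_one_eq_zero i ▸ h)
  simpa [kin_eq_dotProduct] using hM.inv.dotProduct_mulVec_pos hx0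

lemma kin_mul_Gam {w : Matrix (Fin 1) (Fin n) ℝ} (hw : kin M w w = 1)
    (x y : Matrix (Fin 1) (Fin n) ℝ) :
    kin M (x * Gam M w) y = kin M x y - 2 * kin M x w * kin M w y := by
  have hproj : kin M (x * (M⁻¹ * wᵀ * w)) y = kin M x w * kin M w y := by
    calc kin M (x * (M⁻¹ * wᵀ * w)) y = ((x * M⁻¹ * wᵀ) * (w * M⁻¹ * yᵀ)) 0 0 := by
          simp only [kin, Matrix.mul_assoc]
      _ = kin M x w * kin M w y := by simp [kin, mul_apply]
  rw [Gam, hw, div_one, Matrix.mul_sub, Matrix.mul_one, Matrix.mul_smul, kin_sub_left,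
    kin_smul_left, hproj, mul_assoc]

end Kin

section UnitPair

variable {n : ℕ} {M : Matrix (Fin n) (Fin n) ℝ} {u v : Matrix (Fin 1) (Fin n) ℝ}

lemma kin_add_self_of_unit (hM : M.IsSymm) (huu : kin M u u = 1) (hvv : kin M v v = 1) :
    kin M (u + v) (u + v) = 2 + 2 * kin M u v := by
  rw [kin_add_left, kin_add_right, kin_add_right, kin_comm hM v u, huu, hvv]
  ring

lemma kin_le_one_of_unit (hM : M.PosSemidef) (huu : kin M u u = 1) (hvv : kin M v v = 1) :
    kin M u v ≤ 1 := by
  have h := kin_self_nonneg hM (u - v)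
  rw [kin_sub_left, kin_sub_right, kin_sub_right, kin_comm (isHermitian_iff_isSymm.1 hM.1) v u,
    huu, hvv] at h
  linarith

lemma kin_bisector_unit (hM : M.PosSemidef) (huu : kin M u u = 1) (hvv : kin M v v = 1) :
    kin M ((√(kin M (u + v) (u + v)))⁻¹ • (u + v)) u = √(kin M (u + v) (u + v)) / 2 := by
  have hsymm := isHermitian_iff_isSymm.1 hM.1
  have hsq := sq_sqrt (kin_self_nonneg hM (u + v))
  rw [kin_add_self_of_unit hsymm huu hvv] at hsq ⊢
  rw [kin_smul_left, kin_add_left, huu, kin_comm hsymm v u]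
  set N := √(2 + 2 * kin M u v)
  rcases eq_or_ne N 0 with hN | hN
  · simp [hN]
  · field_simp
    linarith

lemma sin_cos_arcsin_kin_bisector (hM : M.PosSemidef) (huu : kin M u u = 1)
    (hvv : kin M v v = 1) {γ : ℝ}
    (hγ : γ = arcsin (kin M ((√(kin M (u + v) (u + v)))⁻¹ • (u + v)) u)) :
    sin γ = √(kin M (u + v) (u + v)) / 2 ∧ cos (2 * γ) = -kin M u v := by
  have hN2 : √(kin M (u + v) (u + v)) ^ 2 = 2 + 2 * kin M u v :=
    (sq_sqrt (kin_self_nonneg hM _)).trans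
      (kin_add_self_of_unit (isHermitian_iff_isSymm.1 hM.1) huu hvv)
  have hsin : sin γ = √(kin M (u + v) (u + v)) / 2 := by
    have hN := sqrt_nonneg (kin M (u + v) (u + v))
    have hle := kin_le_one_of_unit hM huu hvv
    rw [hγ, kin_bisector_unit hM huu hvv, sin_arcsin (by linarith) (by nlinarith)]
  refine ⟨hsin, ?_⟩
  rw [cos_two_mul, cos_sq', hsin]
  linarith

end UnitPair

section Alternating

variable {α : Type*} {u v : α} {w : ℕ → α}

lemma alternating_cases (hw : ∀ i, w i ∈ ({u, v} : Set α)) (halt : ∀ i, w (i + 1) ≠ w i)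
    (i : ℕ) : w i = u ∧ w (i + 1) = v ∨ w i = v ∧ w (i + 1) = u := by
  obtain h | h : w i = u ∨ w i = v := hw i <;>
    obtain h' | h' : w (i + 1) = u ∨ w (i + 1) = v := hw (i + 1)
  all_goals first
    | exact absurd (h'.trans h.symm) (halt i)
    | simp [h, h']

lemma alternating_add_eq {β : Type*} [AddCommMagma β] (hw : ∀ i, w i ∈ ({u, v} : Set α))
    (halt : ∀ i, w (i + 1) ≠ w i) (f : α → β) (i : ℕ) : f (w i) + f (w (i + 1)) = f u + f v := by
  rcases alternating_cases hw halt i with ⟨h, h'⟩ | ⟨h, h'⟩ <;> rw [h, h']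
  exact add_comm _ _

lemma alternating_add_two (hw : ∀ i, w i ∈ ({u, v} : Set α)) (halt : ∀ i, w (i + 1) ≠ w i)
    (i : ℕ) : w (i + 2) = w i := by
  rcases alternating_cases hw halt i with ⟨h, h'⟩ | ⟨h, h'⟩ <;>
    rcases alternating_cases hw halt (i + 1) with ⟨g, g'⟩ | ⟨g, g'⟩ <;> simp_all

end Alternating

section Reflections

variable {n : ℕ} {M : Matrix (Fin n) (Fin n) ℝ}

lemma kin_reflections_eq_sin {γ : ℝ} {w r : ℕ → Matrix (Fin 1) (Fin n) ℝ}
    (hunit : ∀ i, kin M (w i) (w i) = 1)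
    (hcos : ∀ i, kin M (w (i + 1)) (w (i + 2)) = -cos (2 * γ))
    (hper : ∀ i, w (i + 2) = w i)
    (h1 : kin M (r 0) (w 1) = sin γ) (h2 : kin M (r 0) (w 2) = sin γ)
    (hrec : ∀ i, r (i + 1) = r i * Gam M (w (i + 1))) (i : ℕ) :
    kin M (r i) (w (i + 1)) = sin ((2 * i + 1) * γ) ∧
      kin M (r i) (w (i + 2)) = -sin ((2 * i - 1) * γ) := by
  induction i with
  | zero => simpa [neg_mul, sin_neg] using ⟨h1, h2⟩
  | succ i ih =>
    obtain ⟨ha, hb⟩ := ih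
    rw [hrec, kin_mul_Gam (hunit _), kin_mul_Gam (hunit _), hper (i + 1), hunit, ha, hb, hcos]
    push_cast
    constructor
    · have := sin_add_sin ((2 * i + 3) * γ) ((2 * i - 1) * γ)
      ring_nf at this ⊢
      linarith
    · ring_nf

end Reflections

theorem reflected_r_angle_general {n : ℕ}
    (M : Matrix (Fin n) (Fin n) ℝ) (hM : M.PosDef)
    (u v : Matrix (Fin 1) (Fin n) ℝ)
    (huu : kin M u u = 1) (hvv : kin M v v = 1)
    (huv' : u ≠ -v)
    (r0 : Matrix (Fin 1) (Fin n) ℝ)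
    (hr0 : r0 = (Real.sqrt (kin M (u + v) (u + v)))⁻¹ • (u + v))
    (γ : ℝ) (hγ : γ = Real.arcsin (kin M r0 u))
    (w : ℕ → Matrix (Fin 1) (Fin n) ℝ)
    (hw : ∀ i, w i ∈ ({u, v} : Set (Matrix (Fin 1) (Fin n) ℝ)))
    (halt : ∀ i, w (i + 1) ≠ w i)
    (r : ℕ → Matrix (Fin 1) (Fin n) ℝ)
    (hrzero : r 0 = r0)
    (hrec : ∀ i, r (i + 1) = r i * Gam M (w (i + 1))) :
    ∀ i, kin M (r i) r0 = Real.cos (2 * i * γ) := by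
  obtain ⟨hsin, hcos⟩ := sin_cos_arcsin_kin_bisector hM.posSemidef huu hvv (hr0 ▸ hγ)
  have hsymm : M.IsSymm := isHermitian_iff_isSymm.1 hM.1
  set N := √(kin M (u + v) (u + v))
  have hN : 0 < N := sqrt_pos.2 (kin_self_pos hM (by rwa [Ne, add_eq_zero_iff_eq_neg]))
  have hr0w : ∀ i, kin M r0 (w i) = sin γ := fun i => by
    obtain h | h : w i = u ∨ w i = v := hw i <;> rw [h, hsin, hr0]
    · exact kin_bisector_unit hM.posSemidef huu hvv
    · simpa only [add_comm v u] using kin_bisector_unit hM.posSemidef hvv huu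
  have hsteps := kin_reflections_eq_sin (M := M) (γ := γ) (w := w) (r := r)
    (fun i => by obtain h | h : w i = u ∨ w i = v := hw i <;> rw [h] <;> assumption)
    (fun i => by
      rcases alternating_cases hw halt (i + 1) with ⟨h, h'⟩ | ⟨h, h'⟩ <;>
        rw [h, h', hcos, neg_neg, kin_comm hsymm])
    (alternating_add_two hw halt)
    (hrzero ▸ hr0w 1) (hrzero ▸ hr0w 2) hrec
  intro i
  calc kin M (r i) r0 = N⁻¹ * (kin M (r i) (w (i + 1)) + kin M (r i) (w (i + 2))) := by
        rw [hr0, kin_smul_right, kin_add_right, alternating_add_eq hw halt]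
    _ = N⁻¹ * (sin ((2 * i + 1) * γ) - sin ((2 * i - 1) * γ)) := by
        rw [(hsteps i).1, (hsteps i).2, ← sub_eq_add_neg]
    _ = N⁻¹ * (2 * sin γ * cos (2 * i * γ)) := by rw [sin_sub_sin]; ring_nf
    _ = cos (2 * i * γ) := by rw [hsin]; field_simp

theorem reflected_r_angle {n : ℕ}
    (M : Matrix (Fin n) (Fin n) ℝ) (hM : M.PosDef)
    (u v : Matrix (Fin 1) (Fin n) ℝ)
    (huu : kin M u u = 1) (hvv : kin M v v = 1)
    (huv : u ≠ v) (huv' : u ≠ -v)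
    (r0 : Matrix (Fin 1) (Fin n) ℝ)
    (hr0 : r0 = (Real.sqrt (kin M (u + v) (u + v)))⁻¹ • (u + v))
    (γ : ℝ) (hγ : γ = Real.arcsin (kin M r0 u))
    (w : ℕ → Matrix (Fin 1) (Fin n) ℝ)
    (hw : ∀ i, w i ∈ ({u, v} : Set (Matrix (Fin 1) (Fin n) ℝ)))
    (halt : ∀ i, w (i + 1) ≠ w i)
    (r : ℕ → Matrix (Fin 1) (Fin n) ℝ)
    (hrzero : r 0 = r0)
    (hrec : ∀ i, r (i + 1) = r i * Gam M (w (i + 1))) :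
    ∀ i, kin M (r i) r0 = Real.cos (2 * i * γ) :=
  reflected_r_angle_general M hM u v huu hvv huv' r0 hr0 γ hγ w hw halt r hrzero hrec
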